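/- arXiv:2207.11954 — 6 statements merged into one kernel-verified Lean document; each statement's English description precedes it below -/
import Mathlib

section
/- Let a : ℕ → ℤ be an array with unit steps, i.e. |a(t+1) − a(t)| = 1 for all t ∈ ℕ. Let i ≥ 1 and let x be an integer with x < a(i); set d = a(i) − x. Let p be the natural number with 2^p ≤ d < 2^(p+1), and let i₁ = ⌊(i−1)/2^p⌋·2^p + 1 (floor division of natural numbers). Then for every index j with i₁ ≤ j ≤ i one has a(j) > x. -/
/-!
An array with unit steps changes by at most `k` over `k` steps, and every `j` with `i₁ ≤ j ≤ i`
lies within distance `2 ^ p - 1` of `i`, because `i₁ - 1` is `i - 1` rounded down to a multiple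
of `2 ^ p`. Hence `a j ≥ a i - (2 ^ p - 1) > a i - d = x`.
-/

theorem abs_sub_le_nsmul_of_abs_succ_sub_le {α : Type*} [AddCommGroup α] [LinearOrder α]
    [IsOrderedAddMonoid α] (a : ℕ → α) (L : α) (hstep : ∀ t, |a (t + 1) - a t| ≤ L) (n : ℕ) :
    ∀ m : ℕ, |a (n + m) - a n| ≤ m • L
  | 0 => by simp
  | m + 1 =>
    calc |a (n + (m + 1)) - a n|
        = |(a (n + m + 1) - a (n + m)) + (a (n + m) - a n)| := by
          rw [sub_add_sub_cancel, add_assoc]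
      _ ≤ |a (n + m + 1) - a (n + m)| + |a (n + m) - a n| := abs_add_le _ _
      _ ≤ L + m • L := add_le_add (hstep _) (abs_sub_le_nsmul_of_abs_succ_sub_le a L hstep n m)
      _ = (m + 1) • L := by rw [succ_nsmul']

theorem Nat.sub_lt_of_pred_div_mul_add_one_le {i j b : ℕ} (hb : 0 < b)
    (hj₁ : (i - 1) / b * b + 1 ≤ j) (hj₂ : j ≤ i) : i - j < b := by
  have hmod : (i - 1) % b < b := Nat.mod_lt _ hb
  have hdecomp : (i - 1) / b * b + (i - 1) % b = i - 1 := Nat.div_add_mod' _ _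
  omega

theorem stmt_0_general (a : ℕ → ℤ)
    (hstep : ∀ t : ℕ, |a (t + 1) - a t| = 1)
    (i : ℕ) (x : ℤ)
    (d : ℤ) (hd : d = a i - x)
    (p : ℕ) (hp₁ : (2 : ℤ) ^ p ≤ d)
    (i₁ : ℕ) (hi₁ : i₁ = (i - 1) / 2 ^ p * 2 ^ p + 1) :
    ∀ j : ℕ, i₁ ≤ j → j ≤ i → x < a j := by
  rintro j hj₁ hj₂
  subst hi₁
  have hgap : i - j < 2 ^ p := Nat.sub_lt_of_pred_div_mul_add_one_le (by positivity) hj₁ hj₂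
  have hdrop : |a i - a j| ≤ ((i - j : ℕ) : ℤ) := by
    simpa [Nat.add_sub_cancel' hj₂] using
      abs_sub_le_nsmul_of_abs_succ_sub_le a 1 (fun t => (hstep t).le) j (i - j)
  have hgap' : ((i - j : ℕ) : ℤ) < 2 ^ p := by exact_mod_cast hgap
  linarith [(abs_le.mp hdrop).2]

/-- for an array with unit steps, every entry between the jump-back
index `i₁` and `i` is strictly greater than `x`. -/
theorem stmt_0 (a : ℕ → ℤ)
    (hstep : ∀ t : ℕ, |a (t + 1) - a t| = 1)
    (i : ℕ) (hi : 1 ≤ i) (x : ℤ) (hx : x < a i)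
    (d : ℤ) (hd : d = a i - x)
    (p : ℕ) (hp₁ : (2 : ℤ) ^ p ≤ d) (hp₂ : d < 2 ^ (p + 1))
    (i₁ : ℕ) (hi₁ : i₁ = (i - 1) / 2 ^ p * 2 ^ p + 1) :
    ∀ j : ℕ, i₁ ≤ j → j ≤ i → x < a j :=
  stmt_0_general a hstep i x d hd p hp₁ i₁ hi₁
end

section
/- Let a : ℕ → ℤ be an array with unit steps, i.e. |a(t+1) − a(t)| = 1 for all t ∈ ℕ. Let i ≥ 1 and let x be an integer with x < a(i); set d = a(i) − x. Let p be the natural number with 2^p ≤ d < 2^(p+1), and let i₁ = ⌊(i−1)/2^p⌋·2^p + 1 (floor division of natural numbers). Then the first element to the right of position i with value at most x is also the first element to the right of position i₁ with value at most x; formally, the set {j : j ≥ i ∧ a(j) ≤ x} equals the set {j : j ≥ i₁ ∧ a(j) ≤ x}, and in particular their infima coincide. -/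
/-!
An array whose steps are at most `1` cannot climb from a value `≤ x` at position `j` to `a i`
in fewer than `a i - x` steps. Rounding `i - 1` down to a multiple of `2 ^ p` moves the start
left by less than `2 ^ p ≤ a i - x` positions, so no position in between has value `≤ x`.
-/

theorem antitone_sub_natCast_of_succ_sub_le_one {a : ℕ → ℤ} (h : ∀ t, a (t + 1) - a t ≤ 1) :
    Antitone fun t : ℕ => a t - t :=
  antitone_nat_of_succ_le fun t => by push_cast; linarith [h t]

theorem setOf_le_and_le_eq_of_sub_lt {a : ℕ → ℤ} (h : ∀ t, a (t + 1) - a t ≤ 1)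
    {i k : ℕ} {x : ℤ} (hx : x < a i) (hk : k ≤ i + 1) (hik : (i : ℤ) - k < a i - x) :
    {j : ℕ | i ≤ j ∧ a j ≤ x} = {j : ℕ | k ≤ j ∧ a j ≤ x} := by
  ext j
  refine ⟨fun ⟨hij, haj⟩ => ⟨?_, haj⟩, fun ⟨hkj, haj⟩ => ⟨?_, haj⟩⟩
  · have hji : j ≠ i := by rintro rfl; exact hx.not_ge haj
    omega
  · by_contra! hji
    have hclimb := antitone_sub_natCast_of_succ_sub_le_one h hji.le
    have : (k : ℤ) ≤ j := by exact_mod_cast hkj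
    simp only at hclimb
    linarith

theorem stmt_1_general (a : ℕ → ℤ)
    (hstep : ∀ t : ℕ, |a (t + 1) - a t| = 1)
    (i : ℕ) (x : ℤ) (hx : x < a i)
    (d : ℤ) (hd : d = a i - x)
    (p : ℕ) (hp₁ : (2 : ℤ) ^ p ≤ d)
    (i₁ : ℕ) (hi₁ : i₁ = (i - 1) / 2 ^ p * 2 ^ p + 1) :
    {j : ℕ | i ≤ j ∧ a j ≤ x} = {j : ℕ | i₁ ≤ j ∧ a j ≤ x} ∧
      sInf {j : ℕ | i ≤ j ∧ a j ≤ x} = sInf {j : ℕ | i₁ ≤ j ∧ a j ≤ x} := by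
  have hblock_le : (i - 1) / 2 ^ p * 2 ^ p ≤ i - 1 := Nat.div_mul_le_self _ _
  have hblock_lt : i - 1 < (i - 1) / 2 ^ p * 2 ^ p + 2 ^ p :=
    Nat.lt_div_mul_add (Nat.two_pow_pos p)
  have hshift : (i : ℤ) < i₁ + 2 ^ p := by exact_mod_cast (by omega : i < i₁ + 2 ^ p)
  have hsets := setOf_le_and_le_eq_of_sub_lt (fun t => (le_abs_self _).trans (hstep t).le) hx
    (by omega : i₁ ≤ i + 1) (by linarith)
  exact ⟨hsets, by rw [hsets]⟩

/-- the first element to the right of `i` with value at most `x`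
is also the first element to the right of `i₁` with value at most `x`. -/
theorem stmt_1 (a : ℕ → ℤ)
    (hstep : ∀ t : ℕ, |a (t + 1) - a t| = 1)
    (i : ℕ) (hi : 1 ≤ i) (x : ℤ) (hx : x < a i)
    (d : ℤ) (hd : d = a i - x)
    (p : ℕ) (hp₁ : (2 : ℤ) ^ p ≤ d) (hp₂ : d < 2 ^ (p + 1))
    (i₁ : ℕ) (hi₁ : i₁ = (i - 1) / 2 ^ p * 2 ^ p + 1) :
    {j : ℕ | i ≤ j ∧ a j ≤ x} = {j : ℕ | i₁ ≤ j ∧ a j ≤ x} ∧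
      sInf {j : ℕ | i ≤ j ∧ a j ≤ x} = sInf {j : ℕ | i₁ ≤ j ∧ a j ≤ x} :=
  stmt_1_general a hstep i x hx d hd p hp₁ i₁ hi₁
end

section
/- Let a : ℕ → ℤ be an array with unit steps, i.e. |a(t+1) − a(t)| = 1 for all t ∈ ℕ. Let i ≥ 1 and let x be an integer with x < a(i); set d = a(i) − x. Let p be the natural number with 2^p ≤ d < 2^(p+1), and let i₁ = ⌊(i−1)/2^p⌋·2^p + 1 (floor division of natural numbers). Then 0 < a(i₁) − x < 3·2^p. -/
/- The block of `2^p` entries starting at `i₁` contains `i`, so `i - i₁ < 2^p`. Unit steps make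
`a` 1-Lipschitz, hence `a i₁` differs from `a i` by less than `2^p`, while `2^p ≤ a i - x < 2^(p+1)`. -/

lemma abs_sub_le_of_abs_succ_sub_le {a : ℕ → ℤ} (h : ∀ t, |a (t + 1) - a t| ≤ 1) (m k : ℕ) :
    |a (m + k) - a m| ≤ k := by
  induction k with
  | zero => simp
  | succ k ih =>
    calc |a (m + (k + 1)) - a m| = |(a (m + k + 1) - a (m + k)) + (a (m + k) - a m)| := by
          ring_nf
      _ ≤ |a (m + k + 1) - a (m + k)| + |a (m + k) - a m| := abs_add_le _ _
      _ ≤ 1 + k := add_le_add (h _) ih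
      _ = ((k + 1 : ℕ) : ℤ) := by push_cast; ring

theorem stmt_2_general (a : ℕ → ℤ)
    (hstep : ∀ t : ℕ, |a (t + 1) - a t| = 1)
    (i : ℕ) (hi : 1 ≤ i) (x : ℤ)
    (d : ℤ) (hd : d = a i - x)
    (p : ℕ) (hp₁ : (2 : ℤ) ^ p ≤ d) (hp₂ : d < 2 ^ (p + 1))
    (i₁ : ℕ) (hi₁ : i₁ = (i - 1) / 2 ^ p * 2 ^ p + 1) :
    0 < a i₁ - x ∧ a i₁ - x < 3 * 2 ^ p := by
  obtain ⟨k, hk, hik⟩ : ∃ k < 2 ^ p, i₁ + k = i :=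
    ⟨(i - 1) % 2 ^ p, Nat.mod_lt _ (by positivity),
      by rw [hi₁, add_right_comm, Nat.div_add_mod', Nat.sub_add_cancel hi]⟩
  have hdist := abs_le.mp (abs_sub_le_of_abs_succ_sub_le (fun t => (hstep t).le) i₁ k)
  have hk' : (k : ℤ) < 2 ^ p := by exact_mod_cast hk
  rw [hik] at hdist
  rw [pow_succ] at hp₂
  constructor <;> linarith [hdist.1, hdist.2]

/-- the query offset `a i₁ - x` lies strictly between `0` and `3·2^p`. -/
theorem stmt_2 (a : ℕ → ℤ)
    (hstep : ∀ t : ℕ, |a (t + 1) - a t| = 1)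
    (i : ℕ) (hi : 1 ≤ i) (x : ℤ) (hx : x < a i)
    (d : ℤ) (hd : d = a i - x)
    (p : ℕ) (hp₁ : (2 : ℤ) ^ p ≤ d) (hp₂ : d < 2 ^ (p + 1))
    (i₁ : ℕ) (hi₁ : i₁ = (i - 1) / 2 ^ p * 2 ^ p + 1) :
    0 < a i₁ - x ∧ a i₁ - x < 3 * 2 ^ p :=
  stmt_2_general a hstep i hi x d hd p hp₁ hp₂ i₁ hi₁
end

section
/- Let a : ℕ → ℤ be an array with unit steps, i.e. |a(t+1) − a(t)| = 1 for all t ∈ ℕ. Let i ≥ 1 and let x be an integer with x < a(i); set d = a(i) − x. Let p be the natural number with 2^p ≤ d < 2^(p+1), and let i₁ = ⌊(i−1)/2^p⌋·2^p + 1 (floor division of natural numbers). Then the infimum of the set {h : h > i₁ ∧ a(h) ≤ a(i₁) − (a(i₁) − x)} equals the infimum of the set {j : j ≥ i ∧ a(j) ≤ x}; that is, returning the FAR entry FAR_{i₁}[a(i₁) − x] correctly answers the query FS(i,x). -/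
/-
An array with unit steps rises by at most one per step, so `a n ≤ x` at some `n ≤ i` forces
`a i - x ≤ i - n`. Since `i - i₁ < 2 ^ p ≤ a i - x`, no index in `(i₁, i]` satisfies `a n ≤ x`,
and the FAR entry of `i₁` and the query `FS(i, x)` search the same set.
-/

theorem sub_le_sub_of_succ_le_add_one {a : ℕ → ℤ} (hstep : ∀ t, a (t + 1) ≤ a t + 1)
    {m n : ℕ} (hmn : m ≤ n) : a n - n ≤ a m - m :=
  antitone_nat_of_succ_le (f := fun t => a t - t) (fun t => by push_cast; linarith [hstep t]) hmn

theorem setOf_lt_and_le_eq_setOf_le_and_le {a : ℕ → ℤ} (hstep : ∀ t, a (t + 1) ≤ a t + 1)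
    {k i : ℕ} {x : ℤ} (hki : k ≤ i) (hgap : (i : ℤ) - k < a i - x) :
    {h : ℕ | k < h ∧ a h ≤ x} = {j : ℕ | i ≤ j ∧ a j ≤ x} := by
  refine Set.ext fun n => and_congr_left fun hn => ⟨?_, ?_⟩
  · intro hkn
    by_contra! hni
    have hlip := sub_le_sub_of_succ_le_add_one hstep hni.le
    have : (k : ℤ) < n := by exact_mod_cast hkn
    linarith
  · intro hin
    by_contra! hnk
    obtain rfl : n = i := by omega
    have : (k : ℤ) ≤ n := by exact_mod_cast hki
    linarith

theorem stmt_3_general (a : ℕ → ℤ)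
    (hstep : ∀ t : ℕ, |a (t + 1) - a t| = 1)
    (i : ℕ) (hi : 1 ≤ i) (x : ℤ)
    (d : ℤ) (hd : d = a i - x)
    (p : ℕ) (hp₁ : (2 : ℤ) ^ p ≤ d)
    (i₁ : ℕ) (hi₁ : i₁ = (i - 1) / 2 ^ p * 2 ^ p + 1) :
    sInf {h : ℕ | i₁ < h ∧ a h ≤ a i₁ - (a i₁ - x)} =
      sInf {j : ℕ | i ≤ j ∧ a j ≤ x} := by
  have hup : ∀ t, a (t + 1) ≤ a t + 1 := fun t => by
    linarith [(abs_le.mp (hstep t).le).2]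
  have hdecomp : i₁ + (i - 1) % 2 ^ p = i := by
    have := Nat.div_add_mod' (i - 1) (2 ^ p)
    omega
  have hmod : (((i - 1) % 2 ^ p : ℕ) : ℤ) < 2 ^ p := by
    exact_mod_cast Nat.mod_lt _ (by positivity)
  have hgap : (i : ℤ) - i₁ < a i - x := by
    have : (i : ℤ) - i₁ = ((i - 1) % 2 ^ p : ℕ) := by omega
    linarith
  rw [sub_sub_cancel, setOf_lt_and_le_eq_setOf_le_and_le hup (by omega) hgap]

/-- the FAR entry `FAR_{i₁}[a i₁ - x]` correctly answers the query
`FS(i, x)`. -/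
theorem stmt_3 (a : ℕ → ℤ)
    (hstep : ∀ t : ℕ, |a (t + 1) - a t| = 1)
    (i : ℕ) (hi : 1 ≤ i) (x : ℤ) (hx : x < a i)
    (d : ℤ) (hd : d = a i - x)
    (p : ℕ) (hp₁ : (2 : ℤ) ^ p ≤ d) (hp₂ : d < 2 ^ (p + 1))
    (i₁ : ℕ) (hi₁ : i₁ = (i - 1) / 2 ^ p * 2 ^ p + 1) :
    sInf {h : ℕ | i₁ < h ∧ a h ≤ a i₁ - (a i₁ - x)} =
      sInf {j : ℕ | i ≤ j ∧ a j ≤ x} :=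
  stmt_3_general a hstep i hi x d hd p hp₁ i₁ hi₁
end

section
/- For every natural number n ≥ 1, the sum over m from 1 to n of 3·2^{ν₂(m)}, where ν₂(m) denotes the 2-adic valuation of m (the exponent of the largest power of 2 dividing m), is at most 3·n·(⌊log₂ n⌋ + 3). In particular, the total size of all FAR arrays, where the array attached to index i has 3·2^{ν₂(i−1)} entries, is O(n log n). -/
open Finset

/-! Writing `S n = ∑_{m=1}^{n} 2^{ν₂(m)}`, the odd `m ≤ n` contribute `1` each and the even ones
`m = 2k` contribute `2 · 2^{ν₂(k)}`, so `S n ≤ n + 2 S ⌊n/2⌋`. Each of the `⌊log₂ n⌋` halvings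
therefore costs at most `n`, giving `S n ≤ n (⌊log₂ n⌋ + 3)`. -/

lemma padicValNat_two_two_mul {k : ℕ} (hk : k ≠ 0) :
    padicValNat 2 (2 * k) = padicValNat 2 k + 1 := by
  rw [padicValNat.mul two_ne_zero hk, padicValNat.self one_lt_two, add_comm]

lemma sum_Icc_two_pow_padicValNat_two_mul (k : ℕ) :
    ∑ m ∈ Icc 1 (2 * k), 2 ^ padicValNat 2 m = k + 2 * ∑ m ∈ Icc 1 k, 2 ^ padicValNat 2 m := by
  induction k with
  | zero => simp
  | succ k ih =>
    have hodd : padicValNat 2 (2 * k + 1) = 0 := padicValNat.eq_zero_of_not_dvd (by omega)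
    rw [show 2 * (k + 1) = 2 * k + 1 + 1 by ring, sum_Icc_succ_top (by omega),
      sum_Icc_succ_top (by omega), ih, sum_Icc_succ_top (by omega), hodd,
      show 2 * k + 1 + 1 = 2 * (k + 1) by ring, padicValNat_two_two_mul k.succ_ne_zero]
    ring

lemma sum_Icc_two_pow_padicValNat_le_add_two_mul (n : ℕ) :
    ∑ m ∈ Icc 1 n, 2 ^ padicValNat 2 m ≤ n + 2 * ∑ m ∈ Icc 1 (n / 2), 2 ^ padicValNat 2 m := by
  obtain ⟨k, rfl | rfl⟩ := n.even_or_odd'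
  · rw [sum_Icc_two_pow_padicValNat_two_mul, Nat.mul_div_cancel_left k two_pos]
    omega
  · have hodd : padicValNat 2 (2 * k + 1) = 0 := padicValNat.eq_zero_of_not_dvd (by omega)
    rw [sum_Icc_succ_top (by omega), hodd, sum_Icc_two_pow_padicValNat_two_mul,
      show (2 * k + 1) / 2 = k by omega]
    omega

lemma sum_Icc_two_pow_padicValNat_le (n : ℕ) :
    ∑ m ∈ Icc 1 n, 2 ^ padicValNat 2 m ≤ n * (Nat.log 2 n + 3) := by
  induction n using Nat.strong_induction_on with
  | _ n ih =>
    rcases Nat.lt_or_ge n 2 with hn | hn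
    · interval_cases n <;> simp
    have hhalf := ih (n / 2) (Nat.div_lt_self (by omega) one_lt_two)
    have hlog : Nat.log 2 (n / 2) + 1 = Nat.log 2 n := by
      rw [Nat.log_div_base]
      have := Nat.log_pos one_lt_two hn
      omega
    calc ∑ m ∈ Icc 1 n, 2 ^ padicValNat 2 m
        ≤ n + 2 * ∑ m ∈ Icc 1 (n / 2), 2 ^ padicValNat 2 m :=
          sum_Icc_two_pow_padicValNat_le_add_two_mul n
      _ ≤ n + 2 * (n / 2) * (Nat.log 2 (n / 2) + 3) := by rw [mul_assoc]; gcongr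
      _ ≤ n + n * (Nat.log 2 (n / 2) + 3) := by gcongr; exact Nat.mul_div_le n 2
      _ = n * (Nat.log 2 n + 3) := by rw [← hlog]; ring

theorem stmt_6_general (n : ℕ) :
    ∑ m ∈ Finset.Icc 1 n, 3 * 2 ^ (padicValNat 2 m) ≤
      3 * n * (Nat.log 2 n + 3) := by
  rw [← mul_sum, mul_assoc]
  exact Nat.mul_le_mul_left 3 (sum_Icc_two_pow_padicValNat_le n)

/-- the total size of all FAR arrays is `O(n log n)`:
`∑_{m=1}^{n} 3·2^{ν₂(m)} ≤ 3·n·(⌊log₂ n⌋ + 3)`. -/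
theorem stmt_6 (n : ℕ) (hn : 1 ≤ n) :
    ∑ m ∈ Finset.Icc 1 n, 3 * 2 ^ (padicValNat 2 m) ≤
      3 * n * (Nat.log 2 n + 3) :=
  stmt_6_general n
end

section
/- Let a : ℕ → ℤ and let k be a positive integer such that |a(t+1) − a(t)| ≤ k for all t ∈ ℕ. Let i, i₁, p be natural numbers with i₁ ≤ i and i − i₁ < 2^p, and let x be an integer with k·2^p ≤ a(i) − x. Then for every index j with i₁ ≤ j ≤ i one has a(j) > x; consequently, the set {j : j ≥ i ∧ a(j) ≤ x} equals the set {j : j ≥ i₁ ∧ a(j) ≤ x}, so the first element to the right of position i with value at most x is also the first element to the right of position i₁ with value at most x. -/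
/-!
Going left from `i`, each step lowers `a` by at most `k`, so on `[i₁, i]` we have
`a j ≥ a i - k (i - j) ≥ a i - k (2^p - 1) ≥ x + k > x`. Hence no index of `[i₁, i)` has
`a j ≤ x`, and the two sets agree.
-/

lemma sub_le_nsmul_of_forall_succ_sub_le {α : Type*} [AddCommGroup α] [PartialOrder α]
    [IsOrderedAddMonoid α] {a : ℕ → α} {k : α} (hstep : ∀ t, a (t + 1) - a t ≤ k) (j n : ℕ) :
    a (j + n) - a j ≤ n • k := by
  induction n with
  | zero => simp
  | succ n ih =>
    calc a (j + (n + 1)) - a j = (a (j + n + 1) - a (j + n)) + (a (j + n) - a j) :=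
        (sub_add_sub_cancel _ _ _).symm
      _ ≤ k + n • k := add_le_add (hstep (j + n)) ih
      _ = (n + 1) • k := (succ_nsmul' k n).symm

lemma lt_of_forall_succ_sub_le {a : ℕ → ℤ} {k x : ℤ} {i i₁ m : ℕ} (hk : 0 < k)
    (hstep : ∀ t, a (t + 1) - a t ≤ k) (hm : i - i₁ < m) (hx : k * m ≤ a i - x)
    {j : ℕ} (hj₁ : i₁ ≤ j) (hj : j ≤ i) : x < a j := by
  obtain ⟨n, rfl⟩ := Nat.exists_eq_add_of_le hj
  have hrise : a (j + n) - a j ≤ n * k := by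
    simpa using sub_le_nsmul_of_forall_succ_sub_le hstep j n
  have hn : (n : ℤ) + 1 ≤ m := by omega
  nlinarith

lemma setOf_le_and_eq_of_forall_lt {P : ℕ → Prop} {i i₁ : ℕ} (h₁ : i₁ ≤ i)
    (hP : ∀ j, i₁ ≤ j → j < i → ¬ P j) :
    {j | i ≤ j ∧ P j} = {j | i₁ ≤ j ∧ P j} := by
  ext j
  constructor
  · rintro ⟨hj, hPj⟩
    exact ⟨h₁.trans hj, hPj⟩
  · rintro ⟨hj, hPj⟩
    exact ⟨not_lt.mp fun hji => hP j hj hji hPj, hPj⟩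

/-- in the two-level structure (steps bounded by `k`), all entries
between `i₁` and `i` exceed `x`, hence the FS answer sets at `i` and `i₁`
coincide. -/
theorem stmt_8 (a : ℕ → ℤ) (k : ℤ) (hk : 0 < k)
    (hstep : ∀ t : ℕ, |a (t + 1) - a t| ≤ k)
    (i i₁ p : ℕ) (h₁ : i₁ ≤ i) (h₂ : i - i₁ < 2 ^ p)
    (x : ℤ) (hx : k * 2 ^ p ≤ a i - x) :
    (∀ j : ℕ, i₁ ≤ j → j ≤ i → x < a j) ∧
      {j : ℕ | i ≤ j ∧ a j ≤ x} = {j : ℕ | i₁ ≤ j ∧ a j ≤ x} := by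
  have hrise : ∀ t, a (t + 1) - a t ≤ k := fun t => le_of_abs_le (hstep t)
  have hgt : ∀ j, i₁ ≤ j → j ≤ i → x < a j := fun j hj₁ hj =>
    lt_of_forall_succ_sub_le hk hrise h₂ (by exact_mod_cast hx) hj₁ hj
  exact ⟨hgt, setOf_le_and_eq_of_forall_lt h₁ fun j hj₁ hji => not_le.mpr (hgt j hj₁ hji.le)⟩
end
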